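/- For odd p ≥ 3, the number of maximum mutual-visibility sets of the Sierpiński graph S_p^2 equals binom(p, (p+1)/2), and for even p ≥ 4 it equals binom(p+1, (p+2)/2). -/

import Mathlib

open SimpleGraph

/-- A walk is a shortest path: it is a path whose length equals the graph distance. -/
def IsShortest {V : Type*} (G : SimpleGraph V) {u v : V} (p : G.Walk u v) : Prop :=
  p.IsPath ∧ p.length = G.dist u v

/-- `u` and `v` are `X`-visible: some shortest `u,v`-path meets `X` only in `{u,v}`. -/
def Visible {V : Type*} (G : SimpleGraph V) (X : Set V) (u v : V) : Prop :=
  ∃ p : G.Walk u v, IsShortest G p ∧ ∀ w ∈ p.support, w ∈ X → w = u ∨ w = v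

/-- `u` and `v` are `X`-positionable: every shortest `u,v`-path meets `X` only in `{u,v}`. -/
def Positionable {V : Type*} (G : SimpleGraph V) (X : Set V) (u v : V) : Prop :=
  ∀ p : G.Walk u v, IsShortest G p → ∀ w ∈ p.support, w ∈ X → w = u ∨ w = v

def MutualVisibilitySet {V : Type*} (G : SimpleGraph V) (X : Set V) : Prop :=
  ∀ u ∈ X, ∀ v ∈ X, Visible G X u v

def TotalMVSet {V : Type*} (G : SimpleGraph V) (X : Set V) : Prop :=
  ∀ u v : V, Visible G X u v

def OuterMVSet {V : Type*} (G : SimpleGraph V) (X : Set V) : Prop :=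
  MutualVisibilitySet G X ∧ ∀ u ∈ X, ∀ v ∉ X, Visible G X u v

def DualMVSet {V : Type*} (G : SimpleGraph V) (X : Set V) : Prop :=
  MutualVisibilitySet G X ∧ ∀ u ∉ X, ∀ v ∉ X, Visible G X u v

def GeneralPositionSet {V : Type*} (G : SimpleGraph V) (X : Set V) : Prop :=
  ∀ u ∈ X, ∀ v ∈ X, Positionable G X u v

def TotalGPSet {V : Type*} (G : SimpleGraph V) (X : Set V) : Prop :=
  ∀ u v : V, Positionable G X u v

def OuterGPSet {V : Type*} (G : SimpleGraph V) (X : Set V) : Prop :=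
  GeneralPositionSet G X ∧ ∀ u ∈ X, ∀ v ∉ X, Positionable G X u v

def DualGPSet {V : Type*} (G : SimpleGraph V) (X : Set V) : Prop :=
  GeneralPositionSet G X ∧ ∀ u ∉ X, ∀ v ∉ X, Positionable G X u v

/-- The maximum cardinality of a set of vertices satisfying `P`. -/
noncomputable def maxCard {V : Type*} (P : Set V → Prop) : ℕ :=
  sSup {n : ℕ | ∃ X : Set V, P X ∧ X.ncard = n}

/-- The number of sets achieving `maxCard P`. -/
noncomputable def numMaxSets {V : Type*} (P : Set V → Prop) : ℕ :=
  {X : Set V | P X ∧ X.ncard = maxCard P}.ncard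

/-- A vertex is simplicial if its neighborhood induces a complete graph. -/
def Simplicial {V : Type*} (G : SimpleGraph V) (v : V) : Prop :=
  ∀ u w : V, G.Adj v u → G.Adj v w → u ≠ w → G.Adj u w

/-- A set of vertices is convex: every shortest path between its vertices stays inside it. -/
def ConvexSet {V : Type*} (G : SimpleGraph V) (S : Set V) : Prop :=
  ∀ u ∈ S, ∀ v ∈ S, ∀ p : G.Walk u v, IsShortest G p → ∀ w ∈ p.support, w ∈ S

/-- The Sierpiński graph `S_p^2` on vertex set `[p]_0 × [p]_0`:
`(i,j) ~ (i,j')` for `j ≠ j'`, and `(i,j) ~ (j,i)` for `i ≠ j`. -/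
def SP2 (p : ℕ) : SimpleGraph (Fin p × Fin p) where
  Adj u v := (u.1 = v.1 ∧ u.2 ≠ v.2) ∨ (v.1 = u.2 ∧ v.2 = u.1 ∧ u.1 ≠ u.2)
  symm := by
    constructor
    rintro ⟨a, b⟩ ⟨c, d⟩ (⟨h1, h2⟩ | ⟨h1, h2, h3⟩) <;> simp_all <;> tauto
  loopless := by
    constructor
    rintro ⟨a, b⟩ (⟨h1, h2⟩ | ⟨h1, h2, h3⟩) <;> simp_all


/-!
Mutual visibility in `S_p^2` forces a bridge condition on the rows `{a | (i, a) ∈ X}`: if the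
bridge vertex `(i, j)` is in `X` and row `j` is occupied, say by `(j, b)`, then every other
`(i, a) ∈ X` has `a = b`, because the only shortest `(i, a),(j, b)`-path avoiding `(i, j)` is
`(i, a), (a, i), (a, j), (j, a)`. With `k` occupied rows this bounds every row by `p + 1 - k`, so
`|X| ≤ k (p + 1 - k) ≤ ⌊(p + 1)² / 4⌋`. At equality all occupied rows are full, which leaves no
room for bridges, and `X = A × Aᶜ ∪ diag A` for the set `A` of occupied rows, where
`p ≤ 2 |A| ≤ p + 2`. Counting such `A` gives `C(p, (p + 1) / 2)` for odd `p` and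
`C(p, p / 2) + C(p, p / 2 + 1) = C(p + 1, p / 2 + 1)` for even `p`.
-/

open Finset

section

variable {V : Type*} {G : SimpleGraph V}

theorem isShortest_of_length_le_dist {u v : V} (w : G.Walk u v) (h : w.length ≤ G.dist u v) :
    IsShortest G w :=
  have hlen : w.length = G.dist u v := le_antisymm h (dist_le w)
  ⟨w.isPath_of_length_eq_dist hlen, hlen⟩

theorem visible_self (X : Set V) (u : V) : Visible G X u u :=
  ⟨.nil, isShortest_of_length_le_dist _ (Nat.zero_le _), by simp⟩

theorem visible_of_adj (X : Set V) {u v : V} (h : G.Adj u v) : Visible G X u v :=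
  ⟨h.toWalk, isShortest_of_length_le_dist _ (by simp [dist_eq_one_iff_adj.2 h]), by simp⟩

theorem maxCard_eq {P : Set V → Prop} {m : ℕ} (hle : ∀ X, P X → X.ncard ≤ m)
    (hex : ∃ X, P X ∧ X.ncard = m) : maxCard P = m := by
  obtain ⟨X, hX, rfl⟩ := hex
  exact IsGreatest.csSup_eq ⟨⟨X, hX, rfl⟩, by rintro _ ⟨Y, hY, rfl⟩; exact hle Y hY⟩

end

theorem mul_sub_le_sq_div_four (k n : ℕ) : k * (n + 1 - k) ≤ (n + 1) ^ 2 / 4 := by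
  rw [Nat.le_div_iff_mul_le four_pos]
  rcases le_or_gt k (n + 1) with hk | hk
  · zify [hk]
    nlinarith [sq_nonneg ((n : ℤ) + 1 - 2 * k)]
  · simp [Nat.sub_eq_zero_of_le hk.le]

theorem mul_sub_eq_sq_div_four_iff {k n : ℕ} (hk : k ≤ n + 1) :
    k * (n + 1 - k) = (n + 1) ^ 2 / 4 ↔ n ≤ 2 * k ∧ 2 * k ≤ n + 2 := by
  zify [hk]
  have key : 4 * ((k : ℤ) * (n + 1 - k)) + (n + 1 - 2 * k) ^ 2 = (n + 1) ^ 2 := by ring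
  generalize (k : ℤ) * (n + 1 - k) = P at key ⊢
  generalize hd : (n : ℤ) + 1 - 2 * k = d at key
  rcases le_or_gt |d| 1 with h | h
  · have := abs_le.1 h
    have : d ^ 2 ≤ 1 := by nlinarith
    have := sq_nonneg d
    omega
  · have := lt_abs.1 h
    have : 4 ≤ d ^ 2 := by nlinarith [sq_abs d]
    omega

namespace SP2

section Rows

variable {α : Type*} [DecidableEq α]

def BridgeCondition (X : Set (α × α)) : Prop :=
  ∀ ⦃i j a b : α⦄, i ≠ j → a ≠ j → (i, a) ∈ X → (i, j) ∈ X → (j, b) ∈ X →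
    a = b ∧ a ≠ i ∧ (a, j) ∉ X

theorem exists_mem_of_mem_image_fst {T : Finset (α × α)} {i : α} (h : i ∈ T.image Prod.fst) :
    ∃ a, (i, a) ∈ T := by
  obtain ⟨⟨_, a⟩, ha, rfl⟩ := mem_image.1 h
  exact ⟨a, ha⟩

variable [Fintype α]

def row (T : Finset (α × α)) (i : α) : Finset α := univ.filter fun a => (i, a) ∈ T

@[simp] theorem mem_row {T : Finset (α × α)} {i a : α} : a ∈ row T i ↔ (i, a) ∈ T := by
  simp [row]

theorem card_eq_sum_card_row (T : Finset (α × α)) :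
    #T = ∑ i ∈ T.image Prod.fst, #(row T i) := by
  rw [card_eq_sum_card_image Prod.fst T]
  refine sum_congr rfl fun i _ => ?_
  have : {x ∈ T | x.1 = i} = (row T i).map ⟨(i, ·), Prod.mk_right_injective i⟩ := by
    ext ⟨c, d⟩
    simp only [mem_filter, mem_map, mem_row, Function.Embedding.coeFn_mk, Prod.mk.injEq]
    constructor
    · rintro ⟨h, rfl⟩
      exact ⟨d, h, rfl, rfl⟩
    · rintro ⟨d, h, rfl, rfl⟩
      exact ⟨h, rfl⟩
  rw [this, card_map]

variable {T : Finset (α × α)}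

theorem card_row_le_two (hT : BridgeCondition (T : Set (α × α))) {i j : α} (hij : i ≠ j)
    (hj : (i, j) ∈ T) (hocc : j ∈ T.image Prod.fst) : #(row T i) ≤ 2 := by
  obtain ⟨b, hb⟩ := exists_mem_of_mem_image_fst hocc
  have : row T i ⊆ {j, b} := fun a ha => by
    by_cases haj : a = j
    · simp [haj]
    · simp [(hT hij haj (mem_row.1 ha) hj hb).1]
  exact (card_le_card this).trans card_le_two

theorem card_row_le_one (hT : BridgeCondition (T : Set (α × α))) {i j a : α} (hij : i ≠ j)
    (hj : (i, j) ∈ T) (ha : (i, a) ∈ T) (haj : a ≠ j) : #(row T j) ≤ 1 :=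
  card_le_one.2 fun _ hb _ hc =>
    (hT hij haj ha hj (mem_row.1 hb)).1.symm.trans (hT hij haj ha hj (mem_row.1 hc)).1

/-- With every row occupied, two entries `j ≠ a` of row `i` are both bridges of row `i`: the
bridge `a` forces row `a` to be `{j}`, while the bridge `j` excludes `(a, j)` from `T`. -/
theorem card_row_le_one_of_image_fst_eq_univ (hT : BridgeCondition (T : Set (α × α)))
    (hocc : T.image Prod.fst = univ) (i : α) :
    #(row T i) ≤ 1 := by
  by_contra! h
  obtain ⟨j, hj, hji⟩ := exists_mem_ne h i
  obtain ⟨a, ha, haj⟩ := exists_mem_ne h j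
  obtain ⟨b, hb⟩ := exists_mem_of_mem_image_fst (hocc ▸ mem_univ j)
  obtain ⟨hab, hai, hajT⟩ := hT hji.symm haj (mem_row.1 ha) (mem_row.1 hj) hb
  obtain ⟨c, hc⟩ := exists_mem_of_mem_image_fst (hocc ▸ mem_univ a)
  obtain ⟨rfl, -⟩ := hT hai.symm haj.symm (mem_row.1 hj) (mem_row.1 ha) hc
  exact hajT hc

theorem row_subset_insert_compl {i : α} (hi : ∀ j ∈ row T i, j ≠ i → j ∉ T.image Prod.fst) :
    row T i ⊆ insert i (T.image Prod.fst)ᶜ :=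
  fun j hj => by
    by_cases hji : j = i
    · simp [hji]
    · simp [hi j hj hji]

theorem card_row_le (hT : BridgeCondition (T : Set (α × α))) (i : α) :
    #(row T i) ≤ Fintype.card α + 1 - #(T.image Prod.fst) := by
  set O := T.image Prod.fst
  by_cases hbridge : ∃ j ∈ row T i, j ≠ i ∧ j ∈ O
  · obtain ⟨j, hj, hji, hjO⟩ := hbridge
    rcases (card_le_univ O).lt_or_eq with hlt | heq
    · exact (card_row_le_two hT hji.symm (mem_row.1 hj) hjO).trans (by omega)
    · exact (card_row_le_one_of_image_fst_eq_univ hT (eq_univ_of_card O heq) i).trans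
        (by omega)
  · push Not at hbridge
    calc #(row T i) ≤ #(insert i Oᶜ) := card_le_card (row_subset_insert_compl hbridge)
      _ ≤ #Oᶜ + 1 := card_insert_le _ _
      _ = Fintype.card α + 1 - #O := by rw [card_compl]; have := card_le_univ O; omega

theorem card_le_mul (hT : BridgeCondition (T : Set (α × α))) :
    #T ≤ #(T.image Prod.fst) * (Fintype.card α + 1 - #(T.image Prod.fst)) := by
  rw [card_eq_sum_card_row, ← smul_eq_mul]
  exact sum_le_card_nsmul _ _ _ fun i _ => card_row_le hT i

def extremalSet (A : Finset α) : Finset (α × α) := A ×ˢ Aᶜ ∪ A.diag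

theorem mem_extremalSet {A : Finset α} {i a : α} :
    (i, a) ∈ extremalSet A ↔ i ∈ A ∧ (a = i ∨ a ∉ A) := by
  simp only [extremalSet, mem_union, mem_product, mem_compl, mem_diag]
  grind

theorem card_extremalSet (A : Finset α) :
    #(extremalSet A) = #A * (Fintype.card α + 1 - #A) := by
  have hdisj : Disjoint (A ×ˢ Aᶜ) A.diag := disjoint_left.2 fun x hx hd => by
    simp only [mem_product, mem_compl, mem_diag] at hx hd
    exact hx.2 (hd.2 ▸ hd.1)
  rw [extremalSet, card_union_of_disjoint hdisj, card_product, card_compl, diag_card]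
  have := card_le_univ A
  zify [this, show #A ≤ Fintype.card α + 1 by omega]
  ring

theorem extremalSet_injective :
    Function.Injective (extremalSet : Finset α → Finset (α × α)) := fun A B h => by
  ext i
  simpa [mem_extremalSet] using Finset.ext_iff.1 h (i, i)

theorem eq_extremalSet_of_card_eq (hn : 3 ≤ Fintype.card α)
    (hT : BridgeCondition (T : Set (α × α))) (hcard : #T = (Fintype.card α + 1) ^ 2 / 4) :
    T = extremalSet (T.image Prod.fst) := by
  set n := Fintype.card α
  set O := T.image Prod.fst
  have hk : #O ≤ n := card_le_univ O
  have hmul : #O * (n + 1 - #O) = (n + 1) ^ 2 / 4 :=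
    le_antisymm (mul_sub_le_sq_div_four _ n) (hcard ▸ card_le_mul hT)
  have hrange := (mul_sub_eq_sq_div_four_iff (by omega)).1 hmul
  have hfull : ∀ i ∈ O, #(row T i) = n + 1 - #O := by
    refine (sum_eq_sum_iff_of_le fun i _ => card_row_le hT i).1 ?_
    rw [← card_eq_sum_card_row, sum_const, smul_eq_mul, hcard, hmul]
  -- a full row has at least two entries, so a bridge `j` in it would leave row `j` a singleton
  have hnobridge : ∀ i ∈ O, ∀ j ∈ row T i, j ≠ i → j ∉ O := by
    intro i hi j hj hji hjO
    obtain ⟨a, ha, haj⟩ := exists_mem_ne (by rw [hfull i hi]; omega) j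
    have := card_row_le_one hT hji.symm (mem_row.1 hj) (mem_row.1 ha) haj
    rw [hfull j hjO] at this
    omega
  have hrow : ∀ i ∈ O, row T i = insert i Oᶜ := fun i hi =>
    eq_of_subset_of_card_le (row_subset_insert_compl (hnobridge i hi)) (by
      rw [card_insert_of_notMem (by simpa using hi), card_compl, hfull i hi]
      omega)
  ext ⟨i, a⟩
  rw [mem_extremalSet]
  constructor
  · intro h
    have hi : i ∈ O := mem_image_of_mem Prod.fst h
    simpa [hi, hrow i hi] using mem_row.2 h
  · rintro ⟨hi, ha⟩
    exact mem_row.1 (by simpa [hrow i hi] using ha)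

end Rows

section Graph

variable {p : ℕ}

theorem adj_iff {u v : Fin p × Fin p} :
    (SP2 p).Adj u v ↔ (u.1 = v.1 ∧ u.2 ≠ v.2) ∨ (v.1 = u.2 ∧ v.2 = u.1 ∧ u.1 ≠ u.2) := Iff.rfl

theorem adj_row (i : Fin p) {a b : Fin p} (h : a ≠ b) : (SP2 p).Adj (i, a) (i, b) :=
  Or.inl ⟨rfl, h⟩

theorem adj_swap {i j : Fin p} (h : i ≠ j) : (SP2 p).Adj (i, j) (j, i) :=
  Or.inr ⟨rfl, rfl, h⟩

theorem exists_walk_length_le_three {i j : Fin p} (hij : i ≠ j) (a b : Fin p) :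
    ∃ w : (SP2 p).Walk (i, a) (j, b), w.length ≤ 3 := by
  have row_walk : ∀ k c d : Fin p, ∃ w : (SP2 p).Walk (k, c) (k, d), w.length ≤ 1 := by
    intro k c d
    by_cases hcd : c = d
    · exact hcd ▸ ⟨.nil, by simp⟩
    · exact ⟨(adj_row k hcd).toWalk, by simp⟩
  obtain ⟨w₁, hw₁⟩ := row_walk i a j
  obtain ⟨w₂, hw₂⟩ := row_walk j i b
  exact ⟨w₁.append (.cons (adj_swap hij) w₂), by simp; omega⟩

theorem three_le_length {i a j b : Fin p} (hij : i ≠ j) (ha : a ≠ j) (hb : b ≠ i)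
    (w : (SP2 p).Walk (i, a) (j, b)) : 3 ≤ w.length := by
  rcases w with _ | ⟨h₁, _ | ⟨h₂, _ | ⟨h₃, w⟩⟩⟩
  · exact absurd rfl hij
  all_goals simp only [Walk.length_cons, Walk.length_nil]
  all_goals grind [adj_iff]

theorem mem_support_of_length_le_three {i a j b : Fin p} (hij : i ≠ j) (ha : a ≠ j)
    (w : (SP2 p).Walk (i, a) (j, b)) (hw : w.length ≤ 3) :
    (i, j) ∈ w.support ∨ (a = b ∧ a ≠ i ∧ (a, j) ∈ w.support) := by
  rcases w with _ | ⟨h₁, _ | ⟨h₂, _ | ⟨h₃, _ | ⟨h₄, w⟩⟩⟩⟩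
  · exact absurd rfl hij
  all_goals simp only [Walk.support_cons, Walk.support_nil, List.mem_cons, Prod.ext_iff,
    Walk.length_cons, Walk.length_nil, List.not_mem_nil] at hw ⊢
  all_goals grind [adj_iff]

theorem bridgeCondition_of_mutualVisibilitySet {X : Set (Fin p × Fin p)}
    (hX : MutualVisibilitySet (SP2 p) X) : BridgeCondition X := by
  intro i j a b hij ha hia hijX hjb
  obtain ⟨w, hw, hvis⟩ := hX _ hia _ hjb
  obtain ⟨w', hw'⟩ := exists_walk_length_le_three hij a b
  have hlen : w.length ≤ 3 := hw.2 ▸ (dist_le w').trans hw'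
  rcases mem_support_of_length_le_three hij ha w hlen with h | ⟨rfl, hai, h⟩
  · rcases hvis _ h hijX with h' | h' <;> simp_all
  · refine ⟨rfl, hai, fun haX => ?_⟩
    rcases hvis _ h haX with h' | h' <;> simp_all

theorem mutualVisibilitySet_extremalSet (A : Finset (Fin p)) :
    MutualVisibilitySet (SP2 p) (extremalSet A : Set (Fin p × Fin p)) := by
  rintro ⟨i, a⟩ hia ⟨j, b⟩ hjb
  rw [mem_coe, mem_extremalSet] at hia hjb
  by_cases hij : i = j
  · subst hij
    by_cases hab : a = b
    · exact hab ▸ visible_self _ _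
    · exact visible_of_adj _ (adj_row i hab)
  have ha : a ≠ j := by grind
  have hb : i ≠ b := by grind
  let w : (SP2 p).Walk (i, a) (j, b) :=
    .cons (adj_row i ha) (.cons (adj_swap hij) (.cons (adj_row j hb) .nil))
  obtain ⟨w', -⟩ := exists_walk_length_le_three hij a b
  refine ⟨w, isShortest_of_length_le_dist w ?_, ?_⟩
  · obtain ⟨v, hv⟩ := w'.reachable.exists_walk_length_eq_dist
    exact hv ▸ three_le_length hij ha hb.symm v
  · simp only [w, Walk.support_cons, Walk.support_nil, List.mem_cons, List.not_mem_nil,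
      or_false, forall_eq_or_imp, forall_eq, mem_coe, mem_extremalSet]
    grind

theorem maxCard_mutualVisibilitySet :
    maxCard (MutualVisibilitySet (SP2 p)) = (p + 1) ^ 2 / 4 := by
  refine maxCard_eq (fun X hX => ?_) ?_
  · obtain ⟨T, rfl⟩ := X.toFinite.exists_finset_coe
    simpa using (card_le_mul (bridgeCondition_of_mutualVisibilitySet hX)).trans
      (mul_sub_le_sq_div_four _ _)
  · obtain ⟨A, -, hA⟩ := exists_subset_card_eq (s := (univ : Finset (Fin p))) (n := (p + 1) / 2)
      (by simp; omega)
    refine ⟨↑(extremalSet A), mutualVisibilitySet_extremalSet A, ?_⟩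
    rw [Set.ncard_coe_finset, card_extremalSet, Fintype.card_fin,
      mul_sub_eq_sq_div_four_iff (by omega)]
    omega

theorem setOf_mutualVisibilitySet_ncard_eq_maxCard (hp : 3 ≤ p) :
    {X | MutualVisibilitySet (SP2 p) X ∧ X.ncard = maxCard (MutualVisibilitySet (SP2 p))} =
      (fun A : Finset (Fin p) => (↑(extremalSet A) : Set (Fin p × Fin p))) ''
        {A | p ≤ 2 * #A ∧ 2 * #A ≤ p + 2} := by
  ext X
  rw [maxCard_mutualVisibilitySet]
  constructor
  · rintro ⟨hX, hcard⟩
    obtain ⟨T, rfl⟩ := X.toFinite.exists_finset_coe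
    rw [Set.ncard_coe_finset] at hcard
    have hT := eq_extremalSet_of_card_eq (by simpa using hp)
      (bridgeCondition_of_mutualVisibilitySet hX) (by simpa using hcard)
    refine ⟨T.image Prod.fst, ?_, by dsimp only; rw [← hT]⟩
    rw [hT, card_extremalSet, Fintype.card_fin, mul_sub_eq_sq_div_four_iff] at hcard
    · exact hcard
    · simpa using (card_le_univ (T.image Prod.fst)).trans (Nat.le_succ _)
  · rintro ⟨A, hA, rfl⟩
    refine ⟨mutualVisibilitySet_extremalSet A, ?_⟩
    rw [Set.ncard_coe_finset, card_extremalSet, Fintype.card_fin, mul_sub_eq_sq_div_four_iff]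
    · exact hA
    · simpa using (card_le_univ A).trans (Nat.le_succ _)

theorem numMaxSets_mutualVisibilitySet (hp : 3 ≤ p) :
    numMaxSets (MutualVisibilitySet (SP2 p)) =
      {A : Finset (Fin p) | p ≤ 2 * #A ∧ 2 * #A ≤ p + 2}.ncard := by
  rw [numMaxSets, setOf_mutualVisibilitySet_ncard_eq_maxCard hp,
    Set.ncard_image_of_injective _ fun A B h => extremalSet_injective (coe_injective h)]

end Graph

end SP2

section Counting

variable {α : Type*} [Fintype α]

theorem ncard_setOf_card_eq (m : ℕ) :
    {A : Finset α | #A = m}.ncard = (Fintype.card α).choose m := by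
  rw [← card_univ, ← card_powersetCard, ← Set.ncard_coe_finset]
  congr 1
  ext
  simp

theorem ncard_setOf_card_near_half_of_odd (h : Odd (Fintype.card α)) :
    {A : Finset α | Fintype.card α ≤ 2 * #A ∧ 2 * #A ≤ Fintype.card α + 2}.ncard =
      (Fintype.card α).choose ((Fintype.card α + 1) / 2) := by
  obtain ⟨m, hm⟩ := h
  rw [← ncard_setOf_card_eq]
  congr 1
  ext A
  simp only [Set.mem_ofPred_eq]
  omega

theorem ncard_setOf_card_near_half_of_even (h : Even (Fintype.card α)) :
    {A : Finset α | Fintype.card α ≤ 2 * #A ∧ 2 * #A ≤ Fintype.card α + 2}.ncard =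
      (Fintype.card α + 1).choose ((Fintype.card α + 2) / 2) := by
  obtain ⟨m, hm⟩ := h
  have hsplit : {A : Finset α | Fintype.card α ≤ 2 * #A ∧ 2 * #A ≤ Fintype.card α + 2} =
      {A | #A = m} ∪ {A | #A = m + 1} := by
    ext A
    simp only [Set.mem_ofPred_eq, Set.mem_union]
    omega
  have hdisj : Disjoint {A : Finset α | #A = m} {A | #A = m + 1} :=
    Set.disjoint_left.2 fun A h₁ h₂ => by simp_all
  rw [hsplit, Set.ncard_union_eq hdisj, ncard_setOf_card_eq, ncard_setOf_card_eq, hm,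
    show (m + m + 2) / 2 = m + 1 by omega, ← two_mul, Nat.choose_succ_succ']

end Counting

/-- The number of maximum mutual-visibility sets of `S_p^2`. -/
theorem stmt_6 (p : ℕ) (hp : 3 ≤ p) :
    (Odd p → numMaxSets (MutualVisibilitySet (SP2 p)) = Nat.choose p ((p + 1) / 2)) ∧
    (Even p → numMaxSets (MutualVisibilitySet (SP2 p)) = Nat.choose (p + 1) ((p + 2) / 2)) := by
  rw [SP2.numMaxSets_mutualVisibilitySet hp]
  refine ⟨fun hodd => ?_, fun heven => ?_⟩
  · simpa using ncard_setOf_card_near_half_of_odd (α := Fin p) (by simpa using hodd)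
  · simpa using ncard_setOf_card_near_half_of_even (α := Fin p) (by simpa using heven)
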